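/- arXiv:2109.06641 — 5 statements merged into one kernel-verified Lean document; each statement's English description precedes it below -/
import Mathlib

section
/- For a continuous function φ of exponential order and s, τ > 0, one has M_{ρ,m}[φ](s,τ) = (1/τ) · L[ t ↦ φ(t)/((t^m/τ^m) + τ^m)^ρ ](s/τ), i.e. the M-transform equals (1/τ) times the Laplace transform of φ(t)/((t^m/τ^m)+τ^m)^ρ evaluated at s/τ. -/
open MeasureTheory Set

lemma scaled_pow_div_add_pow {𝕜 : Type*} [Field 𝕜] {τ : 𝕜} (hτ : τ ≠ 0) (m : ℕ) (t : 𝕜) :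
    (τ * t) ^ m / τ ^ m + τ ^ m = t ^ m + τ ^ m := by
  rw [mul_pow, mul_div_cancel_left₀ _ (pow_ne_zero m hτ)]

theorem Mtransform_eq_inv_tau_laplace_general
    (ρ : ℂ) (m : ℕ) (φ : ℝ → ℂ)
    (s τ : ℝ) (hτ : 0 < τ) :
    (∫ t in Ioi (0:ℝ), (Real.exp (-(s * t)) : ℂ) * φ (τ * t) /
        (((t ^ m + τ ^ m : ℝ) : ℂ) ^ ρ))
      = (1 / (τ : ℂ)) *
        ∫ t in Ioi (0:ℝ), (Real.exp (-(s / τ * t)) : ℂ) *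
          (φ t / (((t ^ m / τ ^ m + τ ^ m : ℝ) : ℂ) ^ ρ)) := by
  set g : ℝ → ℂ := fun t ↦
    (Real.exp (-(s / τ * t)) : ℂ) * (φ t / (((t ^ m / τ ^ m + τ ^ m : ℝ) : ℂ) ^ ρ))
  have hg : ∀ t, g (τ * t) =
      (Real.exp (-(s * t)) : ℂ) * φ (τ * t) / (((t ^ m + τ ^ m : ℝ) : ℂ) ^ ρ) := fun t ↦ by
    have hst : s / τ * (τ * t) = s * t := by field_simp
    simp only [g, scaled_pow_div_add_pow hτ.ne', hst, mul_div_assoc]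
  calc (∫ t in Ioi (0:ℝ), (Real.exp (-(s * t)) : ℂ) * φ (τ * t) /
          (((t ^ m + τ ^ m : ℝ) : ℂ) ^ ρ))
      = ∫ t in Ioi (0:ℝ), g (τ * t) := by simp only [hg]
    _ = τ⁻¹ • ∫ t in Ioi (τ * 0), g t := integral_comp_mul_left_Ioi g 0 hτ
    _ = (1 / (τ : ℂ)) * ∫ t in Ioi (0:ℝ), g t := by
      rw [mul_zero, Complex.real_smul, Complex.ofReal_inv, one_div]

/-- M_{ρ,m}[φ](s,τ) = (1/τ) L[t ↦ φ(t)/((t^m/τ^m)+τ^m)^ρ](s/τ). -/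
theorem Mtransform_eq_inv_tau_laplace
    (ρ : ℂ) (hρ : 0 ≤ ρ.re) (m : ℕ) (hm : 0 < m) (φ : ℝ → ℂ)
    (hφ : Continuous φ)
    (K γ : ℝ) (hK : 0 < K) (hγ : 0 < γ)
    (hexp : ∀ t ≥ (0:ℝ), ‖φ t‖ ≤ K * Real.exp (t / γ))
    (s τ : ℝ) (hs : 0 < s) (hτ : 0 < τ) :
    (∫ t in Ioi (0:ℝ), (Real.exp (-(s * t)) : ℂ) * φ (τ * t) /
        (((t ^ m + τ ^ m : ℝ) : ℂ) ^ ρ))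
      = (1 / (τ : ℂ)) *
        ∫ t in Ioi (0:ℝ), (Real.exp (-(s / τ * t)) : ℂ) *
          (φ t / (((t ^ m / τ ^ m + τ ^ m : ℝ) : ℂ) ^ ρ)) :=
  Mtransform_eq_inv_tau_laplace_general ρ m φ s τ hτ
end

section
/- For s, τ > 0 and a continuous function φ of exponential order, M_{ρ,m}[φ](s,τ) = (1/s) · S[ t ↦ φ(t)/((t^m/τ^m) + τ^m)^ρ ](τ/s), where S is the Sumudu transform. -/
open MeasureTheory Set

noncomputable def sumudu (ψ : ℝ → ℂ) (u : ℝ) : ℂ :=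
  ∫ t in Ioi (0:ℝ), (Real.exp (-t) : ℂ) * ψ (u * t)

theorem sumudu_comp_mul_left (ψ : ℝ → ℂ) (c u : ℝ) :
    sumudu (fun x => ψ (c * x)) u = sumudu ψ (c * u) := by
  simp only [sumudu, mul_assoc]

theorem integral_Ioi_exp_neg_mul_eq_sumudu (f : ℝ → ℂ) {s : ℝ} (hs : 0 < s) :
    ∫ t in Ioi (0:ℝ), (Real.exp (-(s * t)) : ℂ) * f t = (1 / (s : ℂ)) * sumudu f s⁻¹ := by
  have hsub := integral_comp_mul_left_Ioi
    (fun t => (Real.exp (-t) : ℂ) * f (s⁻¹ * t)) 0 hs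
  simp only [mul_zero, inv_mul_cancel_left₀ hs.ne'] at hsub
  rw [sumudu, hsub, Complex.real_smul, one_div, Complex.ofReal_inv]

theorem Mtransform_eq_sumudu_general
    (ρ : ℂ) (m : ℕ) (φ : ℝ → ℂ)
    (s τ : ℝ) (hs : 0 < s) (hτ : 0 < τ) :
    (∫ t in Ioi (0:ℝ), (Real.exp (-(s * t)) : ℂ) * φ (τ * t) /
        (((t ^ m + τ ^ m : ℝ) : ℂ) ^ ρ))
      = (1 / (s : ℂ)) *
        ∫ t in Ioi (0:ℝ), (Real.exp (-t) : ℂ) *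
          (φ (τ / s * t) /
            ((((τ / s * t) ^ m / τ ^ m + τ ^ m : ℝ) : ℂ) ^ ρ)) := by
  set ψ : ℝ → ℂ := fun x => φ x / (((x ^ m / τ ^ m + τ ^ m : ℝ) : ℂ) ^ ρ)
  have hpow (t : ℝ) : (τ * t) ^ m / τ ^ m = t ^ m := by
    rw [mul_pow, mul_div_cancel_left₀ _ (pow_ne_zero m hτ.ne')]
  calc _ = ∫ t in Ioi (0:ℝ), (Real.exp (-(s * t)) : ℂ) * ψ (τ * t) := by
          simp only [ψ, hpow, mul_div_assoc]
    _ = (1 / (s : ℂ)) * sumudu ψ (τ / s) := by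
          rw [integral_Ioi_exp_neg_mul_eq_sumudu _ hs, sumudu_comp_mul_left, div_eq_mul_inv τ s]

/-- M_{ρ,m}[φ](s,τ) = (1/s) S[t ↦ φ(t)/((t^m/τ^m)+τ^m)^ρ](τ/s),
where S is the Sumudu transform S[ψ](u) = ∫₀^∞ e^{-t} ψ(ut) dt. -/
theorem Mtransform_eq_sumudu
    (ρ : ℂ) (hρ : 0 ≤ ρ.re) (m : ℕ) (hm : 0 < m) (φ : ℝ → ℂ)
    (hφ : Continuous φ)
    (K γ : ℝ) (hK : 0 < K) (hγ : 0 < γ)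
    (hexp : ∀ t ≥ (0:ℝ), ‖φ t‖ ≤ K * Real.exp (t / γ))
    (s τ : ℝ) (hs : 0 < s) (hτ : 0 < τ) :
    (∫ t in Ioi (0:ℝ), (Real.exp (-(s * t)) : ℂ) * φ (τ * t) /
        (((t ^ m + τ ^ m : ℝ) : ℂ) ^ ρ))
      = (1 / (s : ℂ)) *
        ∫ t in Ioi (0:ℝ), (Real.exp (-t) : ℂ) *
          (φ (τ / s * t) /
            ((((τ / s * t) ^ m / τ ^ m + τ ^ m : ℝ) : ℂ) ^ ρ)) :=
  Mtransform_eq_sumudu_general ρ m φ s τ hs hτ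
end

section
/- Convolution theorem for the natural transform: for continuous functions φ, ψ of exponential order and all sufficiently large s > 0 and τ > 0, τ · N[φ](s,τ) · N[ψ](s,τ) = N[φ ∗ ψ](s,τ), where (φ ∗ ψ)(t) = ∫₀^t φ(t−x) ψ(x) dx. -/
open MeasureTheory Set intervalIntegral

/-!
Write `Φ t = e^{-st} φ(τt)` and `Ψ t = e^{-st} ψ(τt)`. The substitution `y = τt` in the inner
integral together with `e^{-sx} = e^{-st} e^{-s(x-t)}` gives
`e^{-sx} (φ ∗ ψ)(τx) = τ (Ψ ∗ Φ)(x)`, and the exponential bound with `cτ < s` makes `Φ`, `Ψ`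
integrable on `(0, ∞)`, so Fubini (`integral_posConvolution`) turns the integral of `Ψ ∗ Φ`
into the product of the integrals of `Ψ` and `Φ`.
-/

theorem integral_Ioi_intervalIntegral_mul_sub {f g : ℝ → ℝ}
    (hf : IntegrableOn f (Ioi 0)) (hg : IntegrableOn g (Ioi 0)) :
    ∫ x in Ioi 0, ∫ t in 0..x, f t * g (x - t) = (∫ x in Ioi 0, f x) * ∫ x in Ioi 0, g x :=
  integral_posConvolution hf hg (ContinuousLinearMap.mul ℝ ℝ)

theorem integrableOn_exp_neg_mul_mul_comp_mul {θ : ℝ → ℝ} {K c s τ : ℝ} (hθ : Continuous θ)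
    (hθ_le : ∀ t ≥ (0:ℝ), |θ t| ≤ K * Real.exp (c * t)) (hτ : 0 ≤ τ) (hcτ : c * τ < s) :
    IntegrableOn (fun t => Real.exp (-(s * t)) * θ (τ * t)) (Ioi 0) := by
  have hdom : IntegrableOn (fun t => K * Real.exp (-(s - c * τ) * t)) (Ioi 0) :=
    (exp_neg_integrableOn_Ioi 0 (by linarith)).const_mul K
  refine hdom.mono' (by fun_prop) ?_
  filter_upwards [ae_restrict_mem measurableSet_Ioi] with t (ht : 0 < t)
  calc ‖Real.exp (-(s * t)) * θ (τ * t)‖ = Real.exp (-(s * t)) * |θ (τ * t)| := by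
        rw [norm_mul, Real.norm_of_nonneg (Real.exp_pos _).le, Real.norm_eq_abs]
    _ ≤ Real.exp (-(s * t)) * (K * Real.exp (c * (τ * t))) :=
        mul_le_mul_of_nonneg_left (hθ_le _ (by positivity)) (Real.exp_pos _).le
    _ = K * Real.exp (-(s - c * τ) * t) := by
        rw [mul_left_comm, ← Real.exp_add]; ring_nf

theorem intervalIntegral_mul_sub_eq_mul_intervalIntegral_comp_mul (φ ψ : ℝ → ℝ) (τ x : ℝ) :
    ∫ y in 0..τ * x, φ (τ * x - y) * ψ y = τ * ∫ t in 0..x, φ (τ * (x - t)) * ψ (τ * t) := by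
  have h := smul_integral_comp_mul_left (a := 0) (b := x) (fun y => φ (τ * x - y) * ψ y) τ
  simp only [smul_eq_mul, mul_zero] at h
  simpa only [mul_sub] using h.symm

theorem exp_neg_mul_mul_intervalIntegral_mul_sub (φ ψ : ℝ → ℝ) (s τ x : ℝ) :
    Real.exp (-(s * x)) * ∫ y in 0..τ * x, φ (τ * x - y) * ψ y =
      τ * ∫ t in 0..x, (Real.exp (-(s * t)) * ψ (τ * t)) *
        (Real.exp (-(s * (x - t))) * φ (τ * (x - t))) := by
  rw [intervalIntegral_mul_sub_eq_mul_intervalIntegral_comp_mul, mul_left_comm,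
    ← intervalIntegral.integral_const_mul]
  congr 1
  refine intervalIntegral.integral_congr fun t _ => ?_
  have hsplit : Real.exp (-(s * x)) = Real.exp (-(s * t)) * Real.exp (-(s * (x - t))) := by
    rw [← Real.exp_add]; ring_nf
  simp only [hsplit]
  ring

theorem natural_transform_convolution_general
    (φ ψ : ℝ → ℝ) (hφ : Continuous φ) (hψ : Continuous ψ)
    (K c : ℝ)
    (hexpφ : ∀ t ≥ (0:ℝ), |φ t| ≤ K * Real.exp (c * t))
    (hexpψ : ∀ t ≥ (0:ℝ), |ψ t| ≤ K * Real.exp (c * t))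
    (s τ : ℝ) (hτ : 0 < τ) (hsc : c < s / τ) :
    τ * (∫ t in Ioi (0:ℝ), Real.exp (-(s * t)) * φ (τ * t)) *
        (∫ t in Ioi (0:ℝ), Real.exp (-(s * t)) * ψ (τ * t))
      = ∫ t in Ioi (0:ℝ), Real.exp (-(s * t)) *
          (∫ x in (0:ℝ)..(τ * t), φ (τ * t - x) * ψ x) := by
  have hcτ : c * τ < s := (lt_div_iff₀ hτ).mp hsc
  have hΦ := integrableOn_exp_neg_mul_mul_comp_mul hφ hexpφ hτ.le hcτ
  have hΨ := integrableOn_exp_neg_mul_mul_comp_mul hψ hexpψ hτ.le hcτ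
  simp only [exp_neg_mul_mul_intervalIntegral_mul_sub, MeasureTheory.integral_const_mul]
  rw [integral_Ioi_intervalIntegral_mul_sub hΨ hΦ]
  ring

/-- convolution theorem for the natural transform:
τ N[φ](s,τ) N[ψ](s,τ) = N[φ ∗ ψ](s,τ). -/
theorem natural_transform_convolution
    (φ ψ : ℝ → ℝ) (hφ : Continuous φ) (hψ : Continuous ψ)
    (K c : ℝ) (hK : 0 < K)
    (hexpφ : ∀ t ≥ (0:ℝ), |φ t| ≤ K * Real.exp (c * t))
    (hexpψ : ∀ t ≥ (0:ℝ), |ψ t| ≤ K * Real.exp (c * t))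
    (s τ : ℝ) (hs : 0 < s) (hτ : 0 < τ) (hsc : c < s / τ) :
    τ * (∫ t in Ioi (0:ℝ), Real.exp (-(s * t)) * φ (τ * t)) *
        (∫ t in Ioi (0:ℝ), Real.exp (-(s * t)) * ψ (τ * t))
      = ∫ t in Ioi (0:ℝ), Real.exp (-(s * t)) *
          (∫ x in (0:ℝ)..(τ * t), φ (τ * t - x) * ψ x) :=
  natural_transform_convolution_general φ ψ hφ hψ K c hexpφ hexpψ s τ hτ hsc
end

section
/- Convolution formula for the M-transform: if Φ(s,τ) = M_{ρ,m}[φ](s,τ) and Ψ(s,τ) = M_{ρ,m}[ψ](s,τ), then τ Φ(s,τ) Ψ(s,τ) = N[φ̃ ∗ ψ̃](s,τ), where φ̃(t) = φ(t)/((t^m/τ^m)+τ^m)^ρ and ψ̃(t) = ψ(t)/((t^m/τ^m)+τ^m)^ρ, and ∗ is the Laplace convolution. -/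
open MeasureTheory Set intervalIntegral

/-! Substituting `x ↦ τ x` turns the Laplace convolution of `F` and `G`, evaluated at `τ x`, into
`τ` times the ordinary Laplace convolution of `F (τ ·)` and `G (τ ·)`; hence the Laplace convolution
theorem gives `τ N[F] N[G] = N[F ∗ G]`. Since `φ̃ (τ t) = φ (τ t) / (t ^ m + τ ^ m) ^ ρ`, the
`M`-transform of `φ` is `N[φ̃]`, and the formula follows. Absolute convergence comes from
`|(t ^ m + τ ^ m) ^ ρ| ≥ (τ ^ m) ^ Re ρ` for `Re ρ ≥ 0`. -/

/-- `N[F](s, τ)`. -/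
noncomputable def nTransform (F : ℝ → ℂ) (s τ : ℝ) : ℂ :=
  ∫ t in Ioi (0:ℝ), (Real.exp (-(s * t)) : ℂ) * F (τ * t)

/-- `M_{ρ,m}[φ](s, τ)`. -/
noncomputable def mTransform (ρ : ℂ) (m : ℕ) (φ : ℝ → ℂ) (s τ : ℝ) : ℂ :=
  ∫ t in Ioi (0:ℝ), (Real.exp (-(s * t)) : ℂ) * φ (τ * t) / (((t ^ m + τ ^ m : ℝ) : ℂ) ^ ρ)

/-- The paper's `φ̃`. -/
noncomputable def mWeighted (ρ : ℂ) (m : ℕ) (τ : ℝ) (φ : ℝ → ℂ) (u : ℝ) : ℂ :=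
  φ u / (((u ^ m / τ ^ m + τ ^ m : ℝ) : ℂ) ^ ρ)

noncomputable def laplaceConv (F G : ℝ → ℂ) (x : ℝ) : ℂ :=
  ∫ u in (0:ℝ)..x, F (x - u) * G u

lemma laplaceConv_mul_left (F G : ℝ → ℂ) (τ x : ℝ) :
    laplaceConv F G (τ * x) = τ * ∫ t in (0:ℝ)..x, F (τ * t) * G (τ * (x - t)) := by
  have hscale := smul_integral_comp_mul_left (a := 0) (b := x) (fun u => F (τ * x - u) * G u) τ
  rw [mul_zero] at hscale
  have hflip := integral_comp_sub_left (a := 0) (b := x) (fun v => F (τ * (x - v)) * G (τ * v)) x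
  simp only [sub_sub_cancel, sub_self, sub_zero] at hflip
  rw [laplaceConv, ← hscale, Complex.real_smul, hflip]
  simp only [mul_sub]

lemma mul_nTransform_mul_nTransform {F G : ℝ → ℂ} {s τ : ℝ}
    (hF : IntegrableOn (fun t => (Real.exp (-(s * t)) : ℂ) * F (τ * t)) (Ioi 0))
    (hG : IntegrableOn (fun t => (Real.exp (-(s * t)) : ℂ) * G (τ * t)) (Ioi 0)) :
    (τ : ℂ) * nTransform F s τ * nTransform G s τ = nTransform (laplaceConv F G) s τ := by
  have hconv := integral_posConvolution hF hG (ContinuousLinearMap.mul ℝ ℂ)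
  simp only [ContinuousLinearMap.mul_apply'] at hconv
  rw [nTransform, nTransform, mul_assoc, ← hconv, ← MeasureTheory.integral_const_mul, nTransform]
  congr 1 with x
  have hexp : ∀ t, (Real.exp (-(s * t)) : ℂ) * Real.exp (-(s * (x - t))) = Real.exp (-(s * x)) :=
    fun t => by rw [← Complex.ofReal_mul, ← Real.exp_add]; ring_nf
  simp only [laplaceConv_mul_left, ← intervalIntegral.integral_const_mul]
  congr 1 with t
  rw [← hexp t]
  ring

lemma integrableOn_exp_mul_comp_mul {F : ℝ → ℂ} {C a s τ : ℝ} (hτ : 0 < τ)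
    (hF : ContinuousOn F (Ioi 0)) (hbound : ∀ u > 0, ‖F u‖ ≤ C * Real.exp (a * u))
    (has : a * τ < s) :
    IntegrableOn (fun t => (Real.exp (-(s * t)) : ℂ) * F (τ * t)) (Ioi 0) := by
  have hcont : ContinuousOn (fun t => (Real.exp (-(s * t)) : ℂ) * F (τ * t)) (Ioi 0) :=
    (by fun_prop : Continuous fun t => (Real.exp (-(s * t)) : ℂ)).continuousOn.mul
      (hF.comp (by fun_prop) fun t (ht : 0 < t) => mul_pos hτ ht)
  refine Integrable.mono' ((exp_neg_integrableOn_Ioi 0 (sub_pos.2 has)).const_mul C)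
    (hcont.aestronglyMeasurable measurableSet_Ioi) ?_
  filter_upwards [ae_restrict_mem measurableSet_Ioi] with t (ht : 0 < t)
  calc ‖(Real.exp (-(s * t)) : ℂ) * F (τ * t)‖
      = Real.exp (-(s * t)) * ‖F (τ * t)‖ := by
        rw [norm_mul, Complex.norm_real, Real.norm_of_nonneg (Real.exp_pos _).le]
    _ ≤ Real.exp (-(s * t)) * (C * Real.exp (a * (τ * t))) :=
        mul_le_mul_of_nonneg_left (hbound _ (mul_pos hτ ht)) (Real.exp_pos _).le
    _ = C * Real.exp (-(s - a * τ) * t) := by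
        rw [mul_left_comm, ← Real.exp_add]; ring_nf

lemma norm_div_ofReal_cpow_le (z : ℂ) {ρ : ℂ} (hρ : 0 ≤ ρ.re) {a c : ℝ} (hc : 0 < c)
    (hca : c ≤ a) : ‖z / (a : ℂ) ^ ρ‖ ≤ ‖z‖ / c ^ ρ.re := by
  rw [norm_div, Complex.norm_cpow_eq_rpow_re_of_pos (hc.trans_le hca)]
  exact div_le_div_of_nonneg_left (norm_nonneg z) (Real.rpow_pos_of_pos hc _)
    (Real.rpow_le_rpow hc.le hca hρ)

lemma ContinuousOn.div_ofReal_cpow {f : ℝ → ℂ} {w : ℝ → ℝ} {S : Set ℝ} (hf : ContinuousOn f S)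
    (hw : ContinuousOn w S) (hpos : ∀ u ∈ S, 0 < w u) (ρ : ℂ) :
    ContinuousOn (fun u => f u / (w u : ℂ) ^ ρ) S :=
  hf.div ((Complex.continuous_ofReal.comp_continuousOn hw).cpow_const
      fun u hu => Complex.ofReal_mem_slitPlane.2 (hpos u hu))
    fun u hu => by simp [Complex.cpow_eq_zero_iff, (hpos u hu).ne']

section mWeighted

variable {ρ : ℂ} {m : ℕ} {τ : ℝ} {φ : ℝ → ℂ}

lemma mWeighted_mul_left (hτ : τ ≠ 0) (t : ℝ) :
    mWeighted ρ m τ φ (τ * t) = φ (τ * t) / (((t ^ m + τ ^ m : ℝ) : ℂ) ^ ρ) := by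
  rw [mWeighted, mul_pow, mul_div_cancel_left₀ _ (pow_ne_zero m hτ)]

lemma mTransform_eq_nTransform_mWeighted (hτ : τ ≠ 0) (s : ℝ) :
    mTransform ρ m φ s τ = nTransform (mWeighted ρ m τ φ) s τ := by
  simp only [mTransform, nTransform, mWeighted_mul_left hτ, mul_div_assoc]

lemma norm_mWeighted_le (hρ : 0 ≤ ρ.re) (hτ : 0 < τ) {u : ℝ} (hu : 0 ≤ u) :
    ‖mWeighted ρ m τ φ u‖ ≤ ‖φ u‖ / (τ ^ m) ^ ρ.re :=
  norm_div_ofReal_cpow_le _ hρ (pow_pos hτ m) (le_add_of_nonneg_left (by positivity))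

lemma continuousOn_mWeighted (hφ : Continuous φ) (hτ : 0 < τ) :
    ContinuousOn (mWeighted ρ m τ φ) (Ioi 0) :=
  hφ.continuousOn.div_ofReal_cpow (by fun_prop)
    (fun u (hu : 0 < u) => by positivity) ρ

lemma integrableOn_exp_mul_mWeighted (hρ : 0 ≤ ρ.re) (hφ : Continuous φ) {K γ s : ℝ}
    (hexp : ∀ t ≥ (0:ℝ), ‖φ t‖ ≤ K * Real.exp (t / γ)) (hτ : 0 < τ) (hsγ : 1 / γ < s / τ) :
    IntegrableOn (fun t => (Real.exp (-(s * t)) : ℂ) * mWeighted ρ m τ φ (τ * t)) (Ioi 0) := by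
  refine integrableOn_exp_mul_comp_mul (C := K / (τ ^ m) ^ ρ.re) (a := 1 / γ) hτ
    (continuousOn_mWeighted hφ hτ) (fun u hu => ?_) (by rwa [lt_div_iff₀ hτ] at hsγ)
  calc ‖mWeighted ρ m τ φ u‖ ≤ ‖φ u‖ / (τ ^ m) ^ ρ.re := norm_mWeighted_le hρ hτ hu.le
    _ ≤ K * Real.exp (u / γ) / (τ ^ m) ^ ρ.re := by gcongr; exact hexp u hu.le
    _ = K / (τ ^ m) ^ ρ.re * Real.exp (1 / γ * u) := by ring_nf

end mWeighted

theorem Mtransform_convolution_general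
    (ρ : ℂ) (hρ : 0 ≤ ρ.re) (m : ℕ) (φ ψ : ℝ → ℂ)
    (hφ : Continuous φ) (hψ : Continuous ψ)
    (K γ : ℝ)
    (hexpφ : ∀ t ≥ (0:ℝ), ‖φ t‖ ≤ K * Real.exp (t / γ))
    (hexpψ : ∀ t ≥ (0:ℝ), ‖ψ t‖ ≤ K * Real.exp (t / γ))
    (s τ : ℝ) (hτ : 0 < τ) (hsγ : 1 / γ < s / τ) :
    (τ : ℂ) *
        (∫ t in Ioi (0:ℝ), (Real.exp (-(s * t)) : ℂ) * φ (τ * t) /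
          (((t ^ m + τ ^ m : ℝ) : ℂ) ^ ρ)) *
        (∫ t in Ioi (0:ℝ), (Real.exp (-(s * t)) : ℂ) * ψ (τ * t) /
          (((t ^ m + τ ^ m : ℝ) : ℂ) ^ ρ))
      = ∫ t in Ioi (0:ℝ), (Real.exp (-(s * t)) : ℂ) *
          (∫ x in (0:ℝ)..(τ * t),
            (φ (τ * t - x) /
              ((((τ * t - x) ^ m / τ ^ m + τ ^ m : ℝ) : ℂ) ^ ρ)) *
            (ψ x / (((x ^ m / τ ^ m + τ ^ m : ℝ) : ℂ) ^ ρ))) := by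
  change (τ : ℂ) * mTransform ρ m φ s τ * mTransform ρ m ψ s τ
    = nTransform (laplaceConv (mWeighted ρ m τ φ) (mWeighted ρ m τ ψ)) s τ
  rw [mTransform_eq_nTransform_mWeighted hτ.ne', mTransform_eq_nTransform_mWeighted hτ.ne']
  exact mul_nTransform_mul_nTransform (integrableOn_exp_mul_mWeighted hρ hφ hexpφ hτ hsγ)
    (integrableOn_exp_mul_mWeighted hρ hψ hexpψ hτ hsγ)

/-- convolution formula for the M-transform:
τ Φ(s,τ) Ψ(s,τ) = N[φ̃ ∗ ψ̃](s,τ), where φ̃(t) = φ(t)/((t^m/τ^m)+τ^m)^ρ and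
ψ̃(t) = ψ(t)/((t^m/τ^m)+τ^m)^ρ. -/
theorem Mtransform_convolution
    (ρ : ℂ) (hρ : 0 ≤ ρ.re) (m : ℕ) (hm : 0 < m) (φ ψ : ℝ → ℂ)
    (hφ : Continuous φ) (hψ : Continuous ψ)
    (K γ : ℝ) (hK : 0 < K) (hγ : 0 < γ)
    (hexpφ : ∀ t ≥ (0:ℝ), ‖φ t‖ ≤ K * Real.exp (t / γ))
    (hexpψ : ∀ t ≥ (0:ℝ), ‖ψ t‖ ≤ K * Real.exp (t / γ))
    (s τ : ℝ) (hs : 0 < s) (hτ : 0 < τ) (hsγ : 1 / γ < s / τ) :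
    (τ : ℂ) *
        (∫ t in Ioi (0:ℝ), (Real.exp (-(s * t)) : ℂ) * φ (τ * t) /
          (((t ^ m + τ ^ m : ℝ) : ℂ) ^ ρ)) *
        (∫ t in Ioi (0:ℝ), (Real.exp (-(s * t)) : ℂ) * ψ (τ * t) /
          (((t ^ m + τ ^ m : ℝ) : ℂ) ^ ρ))
      = ∫ t in Ioi (0:ℝ), (Real.exp (-(s * t)) : ℂ) *
          (∫ x in (0:ℝ)..(τ * t),
            (φ (τ * t - x) /
              ((((τ * t - x) ^ m / τ ^ m + τ ^ m : ℝ) : ℂ) ^ ρ)) *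
            (ψ x / (((x ^ m / τ ^ m + τ ^ m : ℝ) : ℂ) ^ ρ))) :=
  Mtransform_convolution_general ρ hρ m φ ψ hφ hψ K γ hexpφ hexpψ s τ hτ hsγ
end

section
/- Under the notation of the hyperbolic determinant identity, if Δ = 0 (for given fixed parameters ω > 0, a, b ∈ ℝ², α, β ∈ ℝ), then for all x, y ∈ ℝ: ⟨a, C(α−x)⟩ ⟨b, C(β−y)⟩ = ⟨a, C(α−y)⟩ ⟨b, C(β−x)⟩, i.e. the bilinear form factorizes symmetrically. -/
/-- The vector L(y) = (cosh(√ω y), √ω sinh(√ω y)). -/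
noncomputable def Lvec (ω y : ℝ) : ℝ × ℝ :=
  (Real.cosh (Real.sqrt ω * y), Real.sqrt ω * Real.sinh (Real.sqrt ω * y))

/-- The vector C(y) = (sinh(√ω y), √ω cosh(√ω y)). -/
noncomputable def Cvec (ω y : ℝ) : ℝ × ℝ :=
  (Real.sinh (Real.sqrt ω * y), Real.sqrt ω * Real.cosh (Real.sqrt ω * y))

/-- Dot product in ℝ². -/
def dot (u v : ℝ × ℝ) : ℝ := u.1 * v.1 + u.2 * v.2

/-- if Δ = 0 then ⟨a, C(α−x)⟩⟨b, C(β−y)⟩ = ⟨a, C(α−y)⟩⟨b, C(β−x)⟩. -/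
theorem delta_zero_factorization
    (ω : ℝ) (hω : 0 < ω) (a b : ℝ × ℝ) (α β : ℝ)
    (hΔ : dot b (Cvec ω β) * dot a (Lvec ω α) -
        dot a (Cvec ω α) * dot b (Lvec ω β) = 0) :
    ∀ x y : ℝ,
      dot a (Cvec ω (α - x)) * dot b (Cvec ω (β - y))
        = dot a (Cvec ω (α - y)) * dot b (Cvec ω (β - x)) := by
  intro x y
  simp only [dot, Cvec, Lvec] at *
  have hα : ∀ t : ℝ, Real.sqrt ω * (α - t) = Real.sqrt ω * α - Real.sqrt ω * t := by
    intro t; ring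
  have hβ : ∀ t : ℝ, Real.sqrt ω * (β - t) = Real.sqrt ω * β - Real.sqrt ω * t := by
    intro t; ring
  simp only [hα, hβ, Real.sinh_sub, Real.cosh_sub]
  linear_combination (Real.cosh (Real.sqrt ω * x) * Real.sinh (Real.sqrt ω * y)
    - Real.sinh (Real.sqrt ω * x) * Real.cosh (Real.sqrt ω * y)) * hΔ
end
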